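/- arXiv:2001.02197 — 4 statements merged into one kernel-verified Lean document; each statement's English description precedes it below -/
import Mathlib

section
/- For any positive numbers l and M there exists C > 0 such that for all c ∈ ℝ, all q ∈ L¹_loc(ℝ) with ∫_c^{c+l} |1+q(x)| dx ≤ M, and every solution φ of -φ'' + qφ = 0 on [c,c+l], one has ∫_c^{c+l} |φ(t)|² dt ≥ C (|φ(c)|² + |φ'(c)|²). -/
/-!
Let `P = max |φ|` on `I = [c, c + l]`. Since `φ'' = qφ`, `φ'` varies by at most
`P ∫_I |q| ≤ (M + l) P` on `I`, and comparing `φ (c + l) - φ c` with `l φ' c` bounds `|φ' c|`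
by a multiple of `P`; hence `|φ'| ≤ A P` on `I` with `A = 2 (1 + l (M + l)) / l`. So `|φ| ≥ P / 2`
on a subinterval of `I` of length `1 / (2A)` around the maximum, which gives
`∫_I φ² ≥ P² / (8A) ≥ (φ c ² + φ' c ²) / (8A (1 + A²))`.
-/

open MeasureTheory Set

section

variable {φ φ' q : ℝ → ℝ} {a b : ℝ}

lemma integral_abs_le_integral_abs_one_add (hab : a ≤ b) (hq : IntegrableOn q (Icc a b)) :
    ∫ x in a..b, |q x| ≤ (∫ x in a..b, |1 + q x|) + (b - a) := by
  have hq' : IntervalIntegrable q volume a b :=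
    (intervalIntegrable_iff_integrableOn_Icc_of_le hab).2 hq
  have h1q : IntervalIntegrable (fun x => |1 + q x|) volume a b :=
    (intervalIntegrable_const.add hq').abs
  calc ∫ x in a..b, |q x| ≤ ∫ x in a..b, (|1 + q x| + 1) :=
        intervalIntegral.integral_mono_on hab hq'.abs (h1q.add intervalIntegrable_const)
          fun x _ => by simpa [add_comm] using abs_sub_le (1 + q x) 0 1
    _ = (∫ x in a..b, |1 + q x|) + (b - a) := by
        rw [intervalIntegral.integral_add h1q intervalIntegrable_const]
        simp

lemma abs_sub_deriv_le_integral_abs_mul (hab : a ≤ b) (hq : IntegrableOn q (Icc a b))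
    (hφ : ContinuousOn φ (Icc a b)) (hφ' : ∀ x ∈ Icc a b, HasDerivAt φ' (q x * φ x) x)
    {P : ℝ} (hP : ∀ x ∈ Icc a b, |φ x| ≤ P) {x : ℝ} (hx : x ∈ Icc a b) :
    |φ' x - φ' a| ≤ (∫ t in a..b, |q t|) * P := by
  have hax : Icc a x ⊆ Icc a b := Icc_subset_Icc le_rfl hx.2
  have hqφ : IntegrableOn (fun t => q t * φ t) (Icc a x) :=
    (hq.mul_continuousOn hφ isCompact_Icc).mono_set hax
  have hq' : IntervalIntegrable q volume a b :=
    (intervalIntegrable_iff_integrableOn_Icc_of_le hab).2 hq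
  rw [← intervalIntegral.integral_eq_sub_of_hasDerivAt
    (fun t ht => hφ' t (hax (uIcc_of_le hx.1 ▸ ht)))
    ((intervalIntegrable_iff_integrableOn_Icc_of_le hx.1).2 hqφ),
    ← intervalIntegral.integral_mul_const]
  calc |∫ t in a..x, q t * φ t| ≤ ∫ t in a..x, |q t| * P :=
        intervalIntegral.norm_integral_le_of_norm_le hx.1 (ae_of_all _ fun t ht => by
          rw [Real.norm_eq_abs, abs_mul]
          exact mul_le_mul_of_nonneg_left (hP t (hax (Ioc_subset_Icc_self ht))) (abs_nonneg _))
          ((hq'.abs.mul_const P).mono_set (by rwa [uIcc_of_le hx.1, uIcc_of_le hab]))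
    _ ≤ ∫ t in a..b, |q t| * P :=
        intervalIntegral.integral_mono_interval le_rfl hx.1 hx.2
          (ae_of_all _ fun t =>
            mul_nonneg (abs_nonneg _) ((abs_nonneg _).trans (hP a (left_mem_Icc.2 hab))))
          (hq'.abs.mul_const P)

lemma abs_deriv_le_of_abs_sub_deriv_le (hab : a < b)
    (hφ : ∀ x ∈ Icc a b, HasDerivAt φ (φ' x) x) {P D : ℝ} (hP : ∀ x ∈ Icc a b, |φ x| ≤ P)
    (hD : ∀ x ∈ Icc a b, |φ' x - φ' a| ≤ D) {x : ℝ} (hx : x ∈ Icc a b) :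
    |φ' x| ≤ 2 * P / (b - a) + 2 * D := by
  have ha : a ∈ Icc a b := left_mem_Icc.2 hab.le
  have hb : b ∈ Icc a b := right_mem_Icc.2 hab.le
  have hba : 0 < b - a := sub_pos.2 hab
  have hmvt := (convex_Icc a b).norm_image_sub_le_of_norm_hasDerivWithin_le
    (f := fun t => φ t - φ' a * t)
    (fun t ht => ((hφ t ht).sub ((hasDerivAt_id t).const_mul (φ' a))).hasDerivWithinAt.congr_deriv
      (by simp)) (fun t ht => (Real.norm_eq_abs _).trans_le (hD t ht)) ha hb
  simp only [Real.norm_eq_abs, abs_of_pos hba] at hmvt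
  have hφ'a : |(b - a) * φ' a| ≤ 2 * P + D * (b - a) :=
    calc |(b - a) * φ' a| = |(φ b - φ a) - (φ b - φ' a * b - (φ a - φ' a * a))| := by ring_nf
      _ ≤ (|φ b| + |φ a|) + D * (b - a) := (abs_sub _ _).trans (add_le_add (abs_sub _ _) hmvt)
      _ ≤ 2 * P + D * (b - a) := by linarith [hP b hb, hP a ha]
  rw [abs_mul, abs_of_pos hba] at hφ'a
  have hφ'a' : |φ' a| ≤ 2 * P / (b - a) + D := by
    rw [div_add' _ _ _ hba.ne', le_div_iff₀ hba]; linarith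
  linarith [abs_sub_abs_le_abs_sub (φ' x) (φ' a), hD x hx]

lemma exists_Icc_subset_Icc_mem {x δ : ℝ} (hx : x ∈ Icc a b) (hδ : 0 ≤ δ)
    (hδab : δ ≤ b - a) : ∃ s, Icc s (s + δ) ⊆ Icc a b ∧ x ∈ Icc s (s + δ) := by
  refine ⟨min x (b - δ), Icc_subset_Icc (le_min hx.1 (by linarith))
    (by linarith [min_le_right x (b - δ)]), min_le_left _ _, ?_⟩
  rcases min_cases x (b - δ) with ⟨h, -⟩ | ⟨h, -⟩ <;> rw [h] <;> linarith [hx.2]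

lemma mul_sq_le_integral_sq_of_abs_deriv_le (hφ : ∀ x ∈ Icc a b, HasDerivAt φ (φ' x) x)
    {L : ℝ} (hL : ∀ x ∈ Icc a b, |φ' x| ≤ L) {x₀ δ : ℝ} (hx₀ : x₀ ∈ Icc a b) (hδ : 0 ≤ δ)
    (hδab : δ ≤ b - a) (hLδ : 2 * L * δ ≤ |φ x₀|) :
    δ * |φ x₀| ^ 2 / 4 ≤ ∫ t in a..b, φ t ^ 2 := by
  obtain ⟨s, hsub, hx₀s⟩ := exists_Icc_subset_Icc_mem hx₀ hδ hδab
  have hφc : ContinuousOn φ (Icc a b) := fun x hx => (hφ x hx).continuousAt.continuousWithinAt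
  have hL0 : 0 ≤ L := (abs_nonneg _).trans (hL x₀ hx₀)
  have hlow : ∀ t ∈ Icc s (s + δ), |φ x₀| / 2 ≤ |φ t| := by
    intro t ht
    have hmvt := (convex_Icc a b).norm_image_sub_le_of_norm_hasDerivWithin_le
      (fun x hx => (hφ x hx).hasDerivWithinAt) hL hx₀ (hsub ht)
    rw [Real.norm_eq_abs, Real.norm_eq_abs] at hmvt
    have hdist : |t - x₀| ≤ δ :=
      abs_sub_le_iff.2 ⟨by linarith [ht.2, hx₀s.1], by linarith [ht.1, hx₀s.2]⟩
    nlinarith [abs_sub_abs_le_abs_sub (φ x₀) (φ t), abs_sub_comm (φ t) (φ x₀),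
      mul_le_mul_of_nonneg_left hdist hL0]
  calc δ * |φ x₀| ^ 2 / 4 = ∫ _ in s..s + δ, (|φ x₀| / 2) ^ 2 := by
        rw [intervalIntegral.integral_const, smul_eq_mul, add_sub_cancel_left]; ring
    _ ≤ ∫ t in s..s + δ, φ t ^ 2 :=
        intervalIntegral.integral_mono_on (by linarith) intervalIntegrable_const
          ((hφc.pow 2).mono hsub |>.intervalIntegrable_of_Icc (by linarith))
          fun t ht => by rw [← sq_abs (φ t)]; gcongr; exact hlow t ht
    _ ≤ ∫ t in a..b, φ t ^ 2 :=
        intervalIntegral.integral_mono_interval (hsub (left_mem_Icc.2 (by linarith))).1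
          (by linarith) (hsub (right_mem_Icc.2 (by linarith))).2
          (ae_of_all _ fun t => sq_nonneg _)
          ((hφc.pow 2).intervalIntegrable_of_Icc (hx₀.1.trans hx₀.2))

end

/-- Lower bound on the local L² mass of a solution of `-φ'' + qφ = 0` on `[c,c+l]`,
with a constant depending only on `l` and `M`. -/
theorem stmt_1 (l M : ℝ) (hl : 0 < l) (hM : 0 < M) :
    ∃ C > 0, ∀ (c : ℝ) (q φ φ' : ℝ → ℝ),
      IntegrableOn q (Set.Icc c (c + l)) →
      (∫ x in c..(c + l), |1 + q x|) ≤ M →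
      (∀ x ∈ Set.Icc c (c + l), HasDerivAt φ (φ' x) x) →
      (∀ x ∈ Set.Icc c (c + l), HasDerivAt φ' (q x * φ x) x) →
      C * (|φ c| ^ 2 + |φ' c| ^ 2) ≤ ∫ t in c..(c + l), |φ t| ^ 2 := by
  set k := 1 + l * (M + l) with hk_def
  have hk : 1 ≤ k := by nlinarith
  set A := 2 * k / l with hA_def
  refine ⟨l / (16 * k * (1 + A ^ 2)), by positivity, fun c q φ φ' hq hqM hφ hφ' => ?_⟩
  have hcl : c < c + l := by linarith
  have hφc : ContinuousOn φ (Icc c (c + l)) := fun x hx =>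
    (hφ x hx).continuousAt.continuousWithinAt
  obtain ⟨xm, hxm, hmax⟩ := isCompact_Icc.exists_isMaxOn (nonempty_Icc.2 hcl.le) hφc.abs
  have hQ : ∫ x in c..c + l, |q x| ≤ M + l := by
    linarith [integral_abs_le_integral_abs_one_add hcl.le hq]
  have hD : ∀ x ∈ Icc c (c + l), |φ' x - φ' c| ≤ (M + l) * |φ xm| := fun x hx =>
    (abs_sub_deriv_le_integral_abs_mul hcl.le hq hφc hφ' hmax hx).trans
      (mul_le_mul_of_nonneg_right hQ (abs_nonneg _))
  have hL : ∀ x ∈ Icc c (c + l), |φ' x| ≤ A * |φ xm| := fun x hx => by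
    convert abs_deriv_le_of_abs_sub_deriv_le hcl hφ hmax hD hx using 1
    rw [add_sub_cancel_left, hA_def, hk_def]; field_simp
  have hmass := mul_sq_le_integral_sq_of_abs_deriv_le hφ hL hxm (δ := l / (4 * k))
    (by positivity)
    (by rw [add_sub_cancel_left, div_le_iff₀ (by positivity)]; nlinarith)
    (le_of_eq (by rw [hA_def]; field_simp; ring))
  have hc : |φ c| ^ 2 + |φ' c| ^ 2 ≤ (1 + A ^ 2) * |φ xm| ^ 2 := by
    have h0 : |φ c| ≤ |φ xm| := hmax (left_mem_Icc.2 hcl.le)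
    have h1 : |φ' c| ≤ A * |φ xm| := hL c (left_mem_Icc.2 hcl.le)
    nlinarith [abs_nonneg (φ c), abs_nonneg (φ' c)]
  calc l / (16 * k * (1 + A ^ 2)) * (|φ c| ^ 2 + |φ' c| ^ 2)
      ≤ l / (16 * k * (1 + A ^ 2)) * ((1 + A ^ 2) * |φ xm| ^ 2) := by gcongr
    _ = l / (4 * k) * |φ xm| ^ 2 / 4 := by field_simp; ring
    _ ≤ ∫ t in c..c + l, φ t ^ 2 := hmass
    _ = ∫ t in c..c + l, |φ t| ^ 2 := by simp_rw [sq_abs]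
end

section
/- Let (X_j)_{j≥1} be independent real random variables with X_j bounded by a deterministic constant K, E[X_j] = 0, and E[X_j²] = 1. Let (A_j), (B_j) be random variables with A_j, B_j independent of X_j and |A_j|, |B_j| ≤ K. Let 0 < α < 1/2 and define R_n = ∏_{j=1}^{n} exp(X_j A_j / j^{α} + X_j² B_j / j^{2α}). Then there exists C > 0 (depending only on K and α) such that E[R_n²] ≤ exp(C n^{1-2α}) for all n ≥ 1. -/
/-!
Write `t_j = j^{-α}`. Since `exp u ≤ 1 + u + u² e^{|u|}`, the square of the `j`-th factor of `R_n`
is at most `1 + 2 t_j A_j X_j + κ t_j²`, with `κ` depending only on `K`. The earlier factors and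
`A_j` are measurable with respect to `σ(X_i : i < j)`, which is independent of the centered `X_j`,
so the cross term has zero mean and `E[R_j²] ≤ (1 + κ t_j²) E[R_{j-1}²]`. Hence
`E[R_n²] ≤ exp (κ ∑ j^{-2α}) ≤ exp (κ n^{1-2α} / (1 - 2α))`, the last step by the telescoping
bound `p j^{p-1} ≤ j^p - (j-1)^p` for `p = 1 - 2α`, a form of Bernoulli's inequality.
-/

open MeasureTheory ProbabilityTheory

namespace Real

theorem exp_le_one_add_add_sq_mul_exp_abs (u : ℝ) : exp u ≤ 1 + u + u ^ 2 * exp |u| := by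
  -- `exp u - 1 - u ≤ u * (exp u - 1)`, and `u * (exp u - 1) ≤ u ^ 2 * exp |u|` on each side of `0`
  have h : exp u - 1 ≤ u * exp u := by
    have h1 := mul_le_mul_of_nonneg_left (by linarith [add_one_le_exp (-u)] : 1 - u ≤ exp (-u))
      (exp_pos u).le
    rw [← exp_add, add_neg_cancel, exp_zero] at h1
    linarith
  rcases le_total 0 u with hu | hu
  · rw [abs_of_nonneg hu]
    nlinarith [mul_le_mul_of_nonneg_left h hu]
  · rw [abs_of_nonpos hu]
    nlinarith [add_one_le_exp u, one_le_exp (neg_nonneg.2 hu), sq_nonneg u]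

theorem mul_rpow_sub_one_le_rpow_sub_rpow {p x : ℝ} (hp0 : 0 ≤ p) (hp1 : p ≤ 1) (hx : 1 ≤ x) :
    p * x ^ (p - 1) ≤ x ^ p - (x - 1) ^ p := by
  have hx0 : 0 < x := one_pos.trans_le hx
  have hs : -1 ≤ -x⁻¹ := neg_le_neg (inv_le_one_of_one_le₀ hx)
  have hbern := rpow_one_add_le_one_add_mul_self hs hp0 hp1
  have hsplit : (x - 1) ^ p = x ^ p * (1 + -x⁻¹) ^ p := by
    rw [← mul_rpow hx0.le (by linarith)]
    congr 1
    field_simp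
    ring
  have hx_inv : x ^ (p - 1) = x ^ p * x⁻¹ := by rw [rpow_sub_one hx0.ne', div_eq_mul_inv]
  rw [hsplit, hx_inv]
  nlinarith [mul_le_mul_of_nonneg_left hbern (rpow_nonneg hx0.le p)]

theorem mul_sum_Icc_rpow_sub_one_le {p : ℝ} (hp0 : 0 ≤ p) (hp1 : p ≤ 1) (n : ℕ) :
    p * ∑ j ∈ Finset.Icc 1 n, (j : ℝ) ^ (p - 1) ≤ (n : ℝ) ^ p := by
  induction n with
  | zero => simpa using rpow_nonneg le_rfl p
  | succ m ih =>
    have hstep := mul_rpow_sub_one_le_rpow_sub_rpow hp0 hp1 (x := (m : ℝ) + 1) (by simp)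
    rw [Finset.sum_Icc_succ_top (by omega), mul_add]
    push_cast
    rw [add_sub_cancel_right] at hstep
    linarith

end Real

-- `M + M² e^M`, where `M = 2 (K² + K³)` bounds `|2 (x a t + x² b t²)| / t` in `exp_sq_le_one_add`.
noncomputable def expSqConst (K : ℝ) : ℝ :=
  2 * (K ^ 2 + K ^ 3) + (2 * (K ^ 2 + K ^ 3)) ^ 2 * Real.exp (2 * (K ^ 2 + K ^ 3))

theorem expSqConst_pos {K : ℝ} (hK : 0 < K) : 0 < expSqConst K := by
  unfold expSqConst
  positivity

theorem exp_sq_le_one_add {K x a b t : ℝ} (hx : |x| ≤ K) (ha : |a| ≤ K) (hb : |b| ≤ K)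
    (ht0 : 0 ≤ t) (ht1 : t ≤ 1) :
    Real.exp (x * a * t + x ^ 2 * b * t ^ 2) ^ 2 ≤ 1 + 2 * t * a * x + expSqConst K * t ^ 2 := by
  have hK : 0 ≤ K := (abs_nonneg x).trans hx
  set M := 2 * (K ^ 2 + K ^ 3)
  set u := 2 * (x * a * t + x ^ 2 * b * t ^ 2)
  have hxa : |x * a| ≤ K ^ 2 := by
    rw [abs_mul, sq]
    exact mul_le_mul hx ha (abs_nonneg a) hK
  have hxb : |x ^ 2 * b| ≤ K ^ 3 := by
    rw [abs_mul, abs_pow, show K ^ 3 = K ^ 2 * K by ring]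
    exact mul_le_mul (pow_le_pow_left₀ (abs_nonneg x) hx 2) hb (abs_nonneg b) (by positivity)
  obtain ⟨hxa₁, hxa₂⟩ := abs_le.1 hxa
  obtain ⟨hxb₁, hxb₂⟩ := abs_le.1 hxb
  have ht2 : t ^ 2 ≤ t := by nlinarith
  have hK3 : 0 ≤ K ^ 3 := by positivity
  have hM : 0 ≤ M := by simp only [M]; positivity
  have hu_abs : |u| ≤ M * t := abs_le.2 ⟨by nlinarith, by nlinarith⟩
  have hu_le : u ≤ 2 * t * a * x + M * t ^ 2 := by nlinarith [sq_nonneg K]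
  have hu_sq : u ^ 2 ≤ M ^ 2 * t ^ 2 := by
    rw [← sq_abs, ← mul_pow]
    exact pow_le_pow_left₀ (abs_nonneg u) hu_abs 2
  have hexp_abs : Real.exp |u| ≤ Real.exp M :=
    Real.exp_le_exp.2 (hu_abs.trans (mul_le_of_le_one_right hM ht1))
  calc Real.exp (x * a * t + x ^ 2 * b * t ^ 2) ^ 2 = Real.exp u := by
        rw [← Real.exp_nat_mul]
        norm_num [u]
    _ ≤ 1 + u + u ^ 2 * Real.exp |u| := Real.exp_le_one_add_add_sq_mul_exp_abs u
    _ ≤ 1 + (2 * t * a * x + M * t ^ 2) + M ^ 2 * t ^ 2 * Real.exp M := by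
        gcongr
    _ = 1 + 2 * t * a * x + expSqConst K * t ^ 2 := by unfold expSqConst; ring

theorem integral_mul_eq_zero_of_indep {Ω : Type*} {ℱ mΩ : MeasurableSpace Ω} {μ : Measure Ω}
    (hℱ : ℱ ≤ mΩ) {Z X : Ω → ℝ} (hZ : Measurable[ℱ] Z) (hX : Measurable X)
    (hind : Indep ℱ (MeasurableSpace.comap X inferInstance) μ) (hX0 : ∫ ω, X ω ∂μ = 0) :
    ∫ ω, Z ω * X ω ∂μ = 0 := by
  have hZX : IndepFun Z X μ :=
    (IndepFun_iff_Indep _ _ μ).2 (indep_of_indep_of_le_left hind hZ.comap_le)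
  have := hZX.integral_mul_eq_mul_integral (hZ.mono hℱ le_rfl).aestronglyMeasurable
    hX.aestronglyMeasurable
  simpa only [Pi.mul_apply, hX0, mul_zero] using this

theorem integral_mul_le_one_add_mul_integral {Ω : Type*} {ℱ mΩ : MeasurableSpace Ω}
    {μ : Measure Ω} (hℱ : ℱ ≤ mΩ) {P Q X Y : Ω → ℝ} {c C : ℝ} (hP : Measurable[ℱ] P)
    (hP0 : ∀ ω, 0 ≤ P ω) (hPi : Integrable P μ) (hQ : Measurable[ℱ] Q) (hX : Measurable X)
    (hQX : ∀ ω, |Q ω * X ω| ≤ C) (hind : Indep ℱ (MeasurableSpace.comap X inferInstance) μ)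
    (hX0 : ∫ ω, X ω ∂μ = 0) (hY : Measurable Y) (hY0 : ∀ ω, 0 ≤ Y ω)
    (hYle : ∀ ω, Y ω ≤ 1 + Q ω * X ω + c) :
    Integrable (fun ω => P ω * Y ω) μ ∧ ∫ ω, P ω * Y ω ∂μ ≤ (1 + c) * ∫ ω, P ω ∂μ := by
  have hPQX : Integrable (fun ω => P ω * (Q ω * X ω)) μ :=
    hPi.mul_bdd ((hQ.mono hℱ le_rfl).mul hX).aestronglyMeasurable (ae_of_all _ hQX)
  have hcross : ∫ ω, P ω * (Q ω * X ω) ∂μ = 0 := by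
    simpa only [mul_assoc] using
      integral_mul_eq_zero_of_indep (Z := fun ω => P ω * Q ω) hℱ (hP.mul hQ) hX hind hX0
  have hdom : Integrable (fun ω => (1 + c) * P ω + P ω * (Q ω * X ω)) μ :=
    (hPi.const_mul _).add hPQX
  have hPY0 : ∀ ω, 0 ≤ P ω * Y ω := fun ω => mul_nonneg (hP0 ω) (hY0 ω)
  have hPY_le : ∀ ω, P ω * Y ω ≤ (1 + c) * P ω + P ω * (Q ω * X ω) := fun ω =>
    (mul_le_mul_of_nonneg_left (hYle ω) (hP0 ω)).trans_eq (by ring)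
  refine ⟨hdom.mono' ((hP.mono hℱ le_rfl).mul hY).aestronglyMeasurable
    (ae_of_all _ fun ω => (Real.norm_of_nonneg (hPY0 ω)).trans_le (hPY_le ω)), ?_⟩
  calc ∫ ω, P ω * Y ω ∂μ ≤ ∫ ω, (1 + c) * P ω + P ω * (Q ω * X ω) ∂μ :=
        integral_mono_of_nonneg (ae_of_all _ hPY0) hdom (ae_of_all _ hPY_le)
    _ = (1 + c) * ∫ ω, P ω ∂μ := by
        rw [integral_add (hPi.const_mul _) hPQX, integral_const_mul, hcross, add_zero]

section Filtration

variable {Ω : Type*} {mΩ : MeasurableSpace Ω} {μ : Measure Ω}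

theorem integral_prod_le_prod_one_add [IsProbabilityMeasure μ] (ℱ : Filtration ℕ mΩ)
    {X Y Q : ℕ → Ω → ℝ} {c : ℕ → ℝ} (hX : ∀ j, Measurable (X j))
    (hind : ∀ j, Indep (ℱ j) (MeasurableSpace.comap (X j) inferInstance) μ)
    (hX0 : ∀ j, ∫ ω, X j ω ∂μ = 0) (hY : ∀ j, Measurable[ℱ (j + 1)] (Y j))
    (hY0 : ∀ j ω, 0 ≤ Y j ω) (hQ : ∀ j, Measurable[ℱ j] (Q j))
    (hQX : ∀ j, ∃ C, ∀ ω, |Q j ω * X j ω| ≤ C) (hc : ∀ j, 0 ≤ c j)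
    (hYle : ∀ j, 1 ≤ j → ∀ ω, Y j ω ≤ 1 + Q j ω * X j ω + c j) (n : ℕ) :
    ∫ ω, ∏ j ∈ Finset.Icc 1 n, Y j ω ∂μ ≤ ∏ j ∈ Finset.Icc 1 n, (1 + c j) := by
  suffices h : Integrable (fun ω => ∏ j ∈ Finset.Icc 1 n, Y j ω) μ ∧
      ∫ ω, ∏ j ∈ Finset.Icc 1 n, Y j ω ∂μ ≤ ∏ j ∈ Finset.Icc 1 n, (1 + c j) from h.2
  induction n with
  | zero => simp
  | succ m ih =>
    have hP : Measurable[ℱ (m + 1)] fun ω => ∏ j ∈ Finset.Icc 1 m, Y j ω :=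
      Finset.measurable_prod _ fun j hj =>
        (hY j).mono (ℱ.mono (by simp only [Finset.mem_Icc] at hj; omega)) le_rfl
    obtain ⟨C, hC⟩ := hQX (m + 1)
    obtain ⟨hint, hle⟩ := integral_mul_le_one_add_mul_integral (ℱ.le (m + 1)) hP
      (fun ω => Finset.prod_nonneg fun j _ => hY0 j ω) ih.1 (hQ (m + 1)) (hX _) hC (hind _)
      (hX0 _) ((hY (m + 1)).mono (ℱ.le (m + 2)) le_rfl) (hY0 _) (hYle _ (by omega))
    simp only [Finset.prod_Icc_succ_top (by omega : 1 ≤ m + 1)]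
    refine ⟨hint, hle.trans ?_⟩
    rw [mul_comm]
    exact mul_le_mul_of_nonneg_right ih.2 (by linarith [hc (m + 1)])

def pastFiltration {β : Type*} [MeasurableSpace β] (X : ℕ → Ω → β)
    (hX : ∀ i, Measurable (X i)) : Filtration ℕ mΩ where
  seq j := ⨆ i ∈ Finset.range j, MeasurableSpace.comap (X i) inferInstance
  mono' _ _ hjk := biSup_mono fun _ hi =>
    Finset.mem_range.2 ((Finset.mem_range.1 hi).trans_le hjk)
  le' _ := iSup₂_le fun i _ => (hX i).comap_le

theorem measurable_pastFiltration_succ {β : Type*} [MeasurableSpace β] {X : ℕ → Ω → β}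
    (hX : ∀ i, Measurable (X i)) (j : ℕ) : Measurable[pastFiltration X hX (j + 1)] (X j) :=
  (comap_measurable (X j)).mono
    (le_iSup₂ (f := fun i (_ : i ∈ Finset.range (j + 1)) =>
      MeasurableSpace.comap (X i) inferInstance) j (by simp)) le_rfl

theorem ProbabilityTheory.iIndepFun.indep_pastFiltration {β : Type*} [MeasurableSpace β]
    {X : ℕ → Ω → β} (hX : ∀ i, Measurable (X i)) (h : iIndepFun X μ) (j : ℕ) :
    Indep (pastFiltration X hX j) (MeasurableSpace.comap (X j) inferInstance) μ := by
  have := indep_iSup_of_disjoint (fun i => (hX i).comap_le) h.iIndep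
    (S := ↑(Finset.range j)) (T := {j}) (by simp)
  simp only [iSup_singleton, Finset.mem_coe] at this
  exact this

end Filtration

theorem exp_div_rpow_sq_le {K α x a b : ℝ} (hα : 0 ≤ α) {j : ℕ} (hj : 1 ≤ j) (hx : |x| ≤ K)
    (ha : |a| ≤ K) (hb : |b| ≤ K) :
    Real.exp (x * a / (j : ℝ) ^ α + x ^ 2 * b / (j : ℝ) ^ (2 * α)) ^ 2 ≤
      1 + 2 * (j : ℝ) ^ (-α) * a * x + expSqConst K * (j : ℝ) ^ (-(2 * α)) := by
  have hj1 : (1 : ℝ) ≤ j := by exact_mod_cast hj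
  have hj0 : (0 : ℝ) ≤ j := zero_le_one.trans hj1
  have ht0 : 0 ≤ (j : ℝ) ^ (-α) := Real.rpow_nonneg hj0 _
  have ht1 : (j : ℝ) ^ (-α) ≤ 1 := Real.rpow_le_one_of_one_le_of_nonpos hj1 (neg_nonpos.2 hα)
  have hsq : ((j : ℝ) ^ (-α)) ^ 2 = (j : ℝ) ^ (-(2 * α)) := by
    rw [← Real.rpow_natCast, ← Real.rpow_mul hj0]
    ring_nf
  have hdiv₁ : x * a / (j : ℝ) ^ α = x * a * (j : ℝ) ^ (-α) := by
    rw [Real.rpow_neg hj0, div_eq_mul_inv]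
  have hdiv₂ : x ^ 2 * b / (j : ℝ) ^ (2 * α) = x ^ 2 * b * ((j : ℝ) ^ (-α)) ^ 2 := by
    rw [hsq, Real.rpow_neg hj0, div_eq_mul_inv]
  rw [hdiv₁, hdiv₂, ← hsq]
  exact exp_sq_le_one_add hx ha hb ht0 ht1

theorem integral_sq_prod_exp_le_prod {Ω : Type*} {mΩ : MeasurableSpace Ω} {μ : Measure Ω}
    [IsProbabilityMeasure μ] {K α : ℝ} (hK : 0 < K) (hα : 0 ≤ α) {X A B : ℕ → Ω → ℝ}
    (hX : ∀ j, Measurable (X j)) (hindep : iIndepFun X μ) (hXK : ∀ j ω, |X j ω| ≤ K)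
    (hX0 : ∀ j, ∫ ω, X j ω ∂μ = 0) (hAK : ∀ j ω, |A j ω| ≤ K) (hBK : ∀ j ω, |B j ω| ≤ K)
    (hA : ∀ j, Measurable[pastFiltration X hX j] (A j))
    (hB : ∀ j, Measurable[pastFiltration X hX j] (B j)) (n : ℕ) :
    ∫ ω, (∏ j ∈ Finset.Icc 1 n,
        Real.exp (X j ω * A j ω / (j : ℝ) ^ α + X j ω ^ 2 * B j ω / (j : ℝ) ^ (2 * α))) ^ 2 ∂μ ≤
      ∏ j ∈ Finset.Icc 1 n, (1 + expSqConst K * (j : ℝ) ^ (-(2 * α))) := by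
  set ℱ := pastFiltration X hX
  have hY : ∀ j, Measurable[ℱ (j + 1)] fun ω =>
      Real.exp (X j ω * A j ω / (j : ℝ) ^ α + X j ω ^ 2 * B j ω / (j : ℝ) ^ (2 * α)) ^ 2 := by
    intro j
    have hXj := measurable_pastFiltration_succ hX j
    have hAj := (hA j).mono (ℱ.mono j.le_succ) le_rfl
    have hBj := (hB j).mono (ℱ.mono j.le_succ) le_rfl
    exact ((((hXj.mul hAj).div_const _).add
      (((hXj.pow_const 2).mul hBj).div_const _)).exp).pow_const 2
  have hQX : ∀ j : ℕ, ∃ C, ∀ ω, |2 * (j : ℝ) ^ (-α) * A j ω * X j ω| ≤ C := fun j =>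
    ⟨2 * (j : ℝ) ^ (-α) * K * K, fun ω => by
      rw [abs_mul, abs_mul, abs_of_nonneg (by positivity : (0 : ℝ) ≤ 2 * (j : ℝ) ^ (-α))]
      gcongr
      exacts [hAK j ω, hXK j ω]⟩
  simp only [← Finset.prod_pow]
  exact integral_prod_le_prod_one_add ℱ hX (hindep.indep_pastFiltration hX) hX0 hY
    (fun j ω => sq_nonneg _) (fun j => (hA j).const_mul _) hQX
    (fun j => mul_nonneg (expSqConst_pos hK).le (Real.rpow_nonneg j.cast_nonneg _))
    (fun j hj ω => exp_div_rpow_sq_le hα hj (hXK j ω) (hAK j ω) (hBK j ω)) n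

/-- Second-moment bound `E[R_n²] ≤ exp(C n^{1-2α})` for the product
`R_n = ∏_{j=1}^n exp(X_j A_j / j^α + X_j² B_j / j^{2α})`, where the `X_j` are independent,
centered, of unit variance and bounded by `K`, and `A_j, B_j` are bounded by `K` and
measurable with respect to the σ-algebra generated by `X_1, …, X_{j-1}` (hence independent
of `X_j`). The constant `C` depends only on `K` and `α`. -/
theorem stmt_6 (K α : ℝ) (hK : 0 < K) (hα0 : 0 < α) (hα : α < 1 / 2) :
    ∃ C > 0, ∀ (Ω : Type) (mΩ : MeasurableSpace Ω) (μ : Measure Ω),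
      IsProbabilityMeasure μ →
      ∀ X A B : ℕ → Ω → ℝ,
      (∀ j, Measurable (X j)) → (∀ j, Measurable (A j)) → (∀ j, Measurable (B j)) →
      iIndepFun X μ →
      (∀ j ω, |X j ω| ≤ K) →
      (∀ j, ∫ ω, X j ω ∂μ = 0) →
      (∀ j, ∫ ω, (X j ω) ^ 2 ∂μ = 1) →
      (∀ j ω, |A j ω| ≤ K) → (∀ j ω, |B j ω| ≤ K) →
      (∀ j, Measurable[⨆ i ∈ Finset.range j, MeasurableSpace.comap (X i) inferInstance] (A j)) →
      (∀ j, Measurable[⨆ i ∈ Finset.range j, MeasurableSpace.comap (X i) inferInstance] (B j)) →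
      ∀ n : ℕ, 1 ≤ n →
        ∫ ω, (∏ j ∈ Finset.Icc 1 n,
            Real.exp (X j ω * A j ω / (j : ℝ) ^ α + (X j ω) ^ 2 * B j ω / (j : ℝ) ^ (2 * α))) ^ 2 ∂μ
          ≤ Real.exp (C * (n : ℝ) ^ (1 - 2 * α)) := by
  have hp : 0 < 1 - 2 * α := by linarith
  refine ⟨expSqConst K / (1 - 2 * α), div_pos (expSqConst_pos hK) hp, ?_⟩
  intro Ω _ μ _ X A B hX _ _ hindep hXK hX0 _ hAK hBK hA hB n _
  have hsum := Real.mul_sum_Icc_rpow_sub_one_le hp.le (by linarith) n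
  rw [show 1 - 2 * α - 1 = -(2 * α) by ring] at hsum
  calc _ ≤ ∏ j ∈ Finset.Icc 1 n, (1 + expSqConst K * (j : ℝ) ^ (-(2 * α))) :=
        integral_sq_prod_exp_le_prod hK hα0.le hX hindep hXK hX0 hAK hBK hA hB n
    _ ≤ Real.exp (∑ j ∈ Finset.Icc 1 n, expSqConst K * (j : ℝ) ^ (-(2 * α))) :=
        Real.prod_one_add_le_exp_sum _ fun j =>
          mul_nonneg (expSqConst_pos hK).le (Real.rpow_nonneg j.cast_nonneg _)
    _ ≤ Real.exp (expSqConst K / (1 - 2 * α) * (n : ℝ) ^ (1 - 2 * α)) := by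
        rw [Real.exp_le_exp, ← Finset.mul_sum, div_mul_eq_mul_div, le_div_iff₀ hp]
        nlinarith [expSqConst_pos hK]
end

section
/- Let v ∈ (0,1) and let (a_n), (b_n) be nonnegative sequences with b_n ≤ 1. If Q(1) = ∑_n a_n^{1/2} b_n^{1/2}, Q(v) = ∑_n a_n^{v/2} b_n^{1-v/2}, and Q(2) = ∑_n a_n, then E[Q(1)] ≤ E[Q(v)]^{1/(2-v)} E[Q(2)]^{(1-v)/(2-v)}. -/
open MeasureTheory

/-- Interpolation bound for fractional eigenfunction correlators
(Lemma 2.1 of Aizenman–Elgart–Naboko–Schenker–Stolz): with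
`Q(1) = ∑_n a_n^{1/2} b_n^{1/2}`, `Q(v) = ∑_n a_n^{v/2} b_n^{1-v/2}`, `Q(2) = ∑_n a_n`,
for nonnegative `a_n, b_n` with `b_n ≤ 1`, one has
`E[Q(1)] ≤ E[Q(v)]^{1/(2-v)} E[Q(2)]^{(1-v)/(2-v)}`. -/
theorem stmt_11 {Ω : Type} [MeasurableSpace Ω] (μ : Measure Ω) [IsProbabilityMeasure μ]
    (v : ℝ) (hv0 : 0 < v) (hv1 : v < 1)
    (a b : ℕ → Ω → ENNReal) (hma : ∀ n, Measurable (a n)) (hmb : ∀ n, Measurable (b n))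
    (hb1 : ∀ n ω, b n ω ≤ 1) :
    ∫⁻ ω, ∑' n, (a n ω) ^ ((1 : ℝ) / 2) * (b n ω) ^ ((1 : ℝ) / 2) ∂μ ≤
      (∫⁻ ω, ∑' n, (a n ω) ^ (v / 2) * (b n ω) ^ (1 - v / 2) ∂μ) ^ (1 / (2 - v)) *
      (∫⁻ ω, ∑' n, a n ω ∂μ) ^ ((1 - v) / (2 - v)) := by
  have h2v : (0:ℝ) < 2 - v := by linarith
  have hpq : (2 - v).HolderConjugate ((2 - v) / (1 - v)) := by
    rw [Real.holderConjugate_iff]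
    constructor
    · linarith
    · field_simp
      ring
  -- pointwise key identity
  have key : ∀ x y : ENNReal, x ^ ((1:ℝ)/2) * y ^ ((1:ℝ)/2)
      = (x ^ (v/2) * y ^ (1 - v/2)) ^ (1/(2-v)) * x ^ ((1-v)/(2-v)) := by
    intro x y
    rw [ENNReal.mul_rpow_of_nonneg _ _ (one_div_nonneg.mpr h2v.le), ← ENNReal.rpow_mul,
      ← ENNReal.rpow_mul, mul_right_comm,
      ← ENNReal.rpow_add_of_nonneg _ _
        (mul_nonneg (by linarith) (one_div_nonneg.mpr h2v.le))
        (div_nonneg (by linarith) h2v.le)]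
    congr 1
    · congr 1
      field_simp
      ring
    · congr 1
      field_simp
  have step1 : ∀ ω, (∑' n, a n ω ^ ((1:ℝ)/2) * b n ω ^ ((1:ℝ)/2))
      ≤ (∑' n, a n ω ^ (v/2) * b n ω ^ (1 - v/2)) ^ (1/(2-v))
        * (∑' n, a n ω) ^ ((1-v)/(2-v)) := by
    intro ω
    calc (∑' n, a n ω ^ ((1:ℝ)/2) * b n ω ^ ((1:ℝ)/2))
        = ∑' n, ((a n ω ^ (v/2) * b n ω ^ (1 - v/2)) ^ (1/(2-v)))
            * (a n ω ^ ((1-v)/(2-v))) := by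
          exact tsum_congr fun n => key (a n ω) (b n ω)
      _ ≤ (∑' n, ((a n ω ^ (v/2) * b n ω ^ (1 - v/2)) ^ (1/(2-v))) ^ (2-v)) ^ (1/(2-v))
            * (∑' n, (a n ω ^ ((1-v)/(2-v))) ^ ((2-v)/(1-v))) ^ (1/((2-v)/(1-v))) := by
          rw [← lintegral_count, ← lintegral_count, ← lintegral_count]
          exact ENNReal.lintegral_mul_le_Lp_mul_Lq _ hpq
            (Measurable.aemeasurable (by measurability))
            (Measurable.aemeasurable (by measurability))
      _ = (∑' n, a n ω ^ (v/2) * b n ω ^ (1 - v/2)) ^ (1/(2-v))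
            * (∑' n, a n ω) ^ ((1-v)/(2-v)) := by
          congr 1
          · congr 1
            refine tsum_congr fun n => ?_
            rw [← ENNReal.rpow_mul, one_div, inv_mul_cancel₀ (by linarith), ENNReal.rpow_one]
          · rw [one_div, inv_div]
            congr 1
            refine tsum_congr fun n => ?_
            rw [← ENNReal.rpow_mul]
            rw [div_mul_div_comm]
            rw [show (1-v)*(2-v) = (2-v)*(1-v) by ring, div_self (mul_pos h2v (by linarith : (0:ℝ) < 1 - v)).ne', ENNReal.rpow_one]
  have hQv : Measurable fun ω => ∑' n, a n ω ^ (v/2) * b n ω ^ (1 - v/2) := by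
    apply Measurable.ennreal_tsum
    intro n
    exact ((hma n).pow_const _).mul ((hmb n).pow_const _)
  have hQ2 : Measurable fun ω => ∑' n, a n ω := Measurable.ennreal_tsum hma
  calc ∫⁻ ω, ∑' n, (a n ω) ^ ((1 : ℝ) / 2) * (b n ω) ^ ((1 : ℝ) / 2) ∂μ
      ≤ ∫⁻ ω, ((fun ω => (∑' n, a n ω ^ (v/2) * b n ω ^ (1 - v/2)) ^ (1/(2-v)))
          * (fun ω => (∑' n, a n ω) ^ ((1-v)/(2-v)))) ω ∂μ :=
        lintegral_mono fun ω => step1 ω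
    _ ≤ (∫⁻ ω, ((∑' n, a n ω ^ (v/2) * b n ω ^ (1 - v/2)) ^ (1/(2-v))) ^ (2-v) ∂μ) ^ (1/(2-v))
          * (∫⁻ ω, ((∑' n, a n ω) ^ ((1-v)/(2-v))) ^ ((2-v)/(1-v)) ∂μ) ^ (1/((2-v)/(1-v))) :=
        ENNReal.lintegral_mul_le_Lp_mul_Lq μ hpq
          ((hQv.pow_const _).aemeasurable) ((hQ2.pow_const _).aemeasurable)
    _ = (∫⁻ ω, ∑' n, (a n ω) ^ (v / 2) * (b n ω) ^ (1 - v / 2) ∂μ) ^ (1 / (2 - v)) *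
        (∫⁻ ω, ∑' n, a n ω ∂μ) ^ ((1 - v) / (2 - v)) := by
        congr 1
        · congr 1
          refine lintegral_congr fun ω => ?_
          rw [← ENNReal.rpow_mul, one_div, inv_mul_cancel₀ (by linarith), ENNReal.rpow_one]
        · rw [one_div, inv_div]
          congr 1
          refine lintegral_congr fun ω => ?_
          rw [← ENNReal.rpow_mul, div_mul_div_comm,
            show (1-v)*(2-v) = (2-v)*(1-v) by ring, div_self (mul_pos h2v (by linarith : (0:ℝ) < 1 - v)).ne', ENNReal.rpow_one]
end

section
/- Let (T_j)_{j≥1} be independent random 2×2 real matrices with ‖T_j‖, ‖T_j^{-1}‖ ≤ M deterministically, and suppose there exist n₀ ≥ 1, c₄ > 0 and s > 0 such that for every l ≥ 1 and every unit vector ψ, E[‖T_{l n₀} ⋯ T_{(l-1)n₀+1} ψ‖^{-s} | 𝓕_{l-1}] ≤ 1 - c₄ l^{-2α} almost surely, where 𝓕_{l-1} = σ(T_1, …, T_{(l-1)n₀}) and 0 < α < 1/2. Then for all integers 0 ≤ m < n and every unit vector ψ₀, E[‖T_n ⋯ T_m ψ₀‖^{-s}] ≤ C exp(c m^{1-2α}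 - c n^{1-2α}) for constants C < ∞ and c > 0 depending only on M, n₀, c₄, α. -/
/-!
Conditioning on the past is traded for independence: the block `B_l = T_{ln₀} ⋯ T_{(l-1)n₀+1}`
is independent of the random vector `W = T_{(l-1)n₀} ⋯ T_m ψ₀`, so integrating first over `B_l`
(Tonelli on the joint law) and using the homogeneity of `v ↦ ‖v‖^{-s}` gives
`E ‖B_l W‖^{-s} ≤ (1 - c₄ l^{-2α}) E ‖W‖^{-s}`. Iterating over the full blocks between `m` and `n`
and paying `M^s` for each factor of the two incomplete boundary blocks yields
`E ‖T_n ⋯ T_m ψ₀‖^{-s} ≤ M^{2 s n₀} ∏_l (1 - c₄ l^{-2α}) ≤ M^{2 s n₀} exp (-c₄ ∑_l l^{-2α})`,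
and concavity of `x ↦ x^{1-2α}` bounds the sum below by a difference of `(1-2α)`-th powers.
-/

open MeasureTheory ProbabilityTheory ContinuousLinearMap

noncomputable instance : MeasurableSpace
    (EuclideanSpace ℝ (Fin 2) →L[ℝ] EuclideanSpace ℝ (Fin 2)) := borel _

instance : BorelSpace
    (EuclideanSpace ℝ (Fin 2) →L[ℝ] EuclideanSpace ℝ (Fin 2)) := ⟨rfl⟩

/-- The product `T_{l n₀} ⋯ T_{(l-1)n₀+1}` of a block of `n₀` consecutive transfer matrices,
applied as an operator (the list `[T_{ln₀}, T_{ln₀-1}, …]` multiplied in order). -/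
noncomputable def blockProd {Ω : Type}
    (T : ℕ → Ω → (EuclideanSpace ℝ (Fin 2) →L[ℝ] EuclideanSpace ℝ (Fin 2)))
    (ω : Ω) (len top : ℕ) : EuclideanSpace ℝ (Fin 2) →L[ℝ] EuclideanSpace ℝ (Fin 2) :=
  ((List.range len).map fun i => T (top - i) ω).prod

open scoped ENNReal

local notation "E₂" => EuclideanSpace ℝ (Fin 2)

lemma ProbabilityTheory.IndepFun.lintegral_comp_le {Ω α β : Type*} [MeasurableSpace Ω]
    [MeasurableSpace α] [MeasurableSpace β] {μ : Measure Ω} [IsFiniteMeasure μ]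
    {X : Ω → α} {Y : Ω → β} (hXY : IndepFun X Y μ) (hX : Measurable X) (hY : Measurable Y)
    {H : α × β → ℝ≥0∞} (hH : Measurable H) {G : β → ℝ≥0∞}
    (hG : ∀ b, ∫⁻ ω, H (X ω, b) ∂μ ≤ G b) :
    ∫⁻ ω, H (X ω, Y ω) ∂μ ≤ ∫⁻ ω, G (Y ω) ∂μ := by
  have hlaw := (indepFun_iff_map_prod_eq_prod_map_map hX.aemeasurable hY.aemeasurable).1 hXY
  calc ∫⁻ ω, H (X ω, Y ω) ∂μ = ∫⁻ z, H z ∂(μ.map X).prod (μ.map Y) := by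
        rw [← hlaw, lintegral_map hH (hX.prodMk hY)]
    _ = ∫⁻ b, ∫⁻ a, H (a, b) ∂μ.map X ∂μ.map Y := lintegral_prod_symm _ hH.aemeasurable
    _ ≤ ∫⁻ b, G b ∂μ.map Y := lintegral_mono fun b => by
        rw [lintegral_map (f := fun a => H (a, b)) (hH.comp measurable_prodMk_right) hX]
        exact hG b
    _ ≤ ∫⁻ ω, G (Y ω) ∂μ := lintegral_map_le _ _

lemma add_one_rpow_sub_rpow_le {p x : ℝ} (hp0 : 0 ≤ p) (hp1 : p ≤ 1) (hx : 0 < x) :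
    (x + 1) ^ p - x ^ p ≤ p * x ^ (p - 1) := by
  have hBernoulli := rpow_one_add_le_one_add_mul_self
    (s := x⁻¹) (by linarith [inv_pos.2 hx]) hp0 hp1
  rw [show x + 1 = x * (1 + x⁻¹) by field_simp, Real.mul_rpow hx.le (by positivity),
    Real.rpow_sub_one hx.ne']
  calc x ^ p * (1 + x⁻¹) ^ p - x ^ p ≤ x ^ p * (1 + p * x⁻¹) - x ^ p := by gcongr
    _ = p * (x ^ p / x) := by ring

lemma succ_rpow_sub_succ_rpow_le_sum {p : ℝ} (hp0 : 0 ≤ p) (hp1 : p ≤ 1) (a b : ℕ) :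
    ((b : ℝ) + 1) ^ p - ((a : ℝ) + 1) ^ p ≤ p * ∑ l ∈ Finset.Ioc a b, (l : ℝ) ^ (p - 1) := by
  rcases le_total b a with hba | hab
  · have hle : ((b : ℝ) + 1) ^ p ≤ ((a : ℝ) + 1) ^ p := by gcongr
    have : 0 ≤ p * ∑ l ∈ Finset.Ioc a b, (l : ℝ) ^ (p - 1) := by positivity
    linarith
  · induction b, hab using Nat.le_induction with
    | base => simp
    | succ b hab ih =>
      rw [Finset.sum_Ioc_succ_top hab, mul_add]
      have := add_one_rpow_sub_rpow_le hp0 hp1 (x := (b : ℝ) + 1) (by positivity)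
      push_cast
      linarith

lemma prod_ofReal_one_sub_div_rpow_le {c₄ α : ℝ} (hc₄ : 0 ≤ c₄) (hα0 : 0 ≤ α) (hα : α < 1 / 2)
    (a b : ℕ) :
    ∏ l ∈ Finset.Ioc a b, ENNReal.ofReal (1 - c₄ / (l : ℝ) ^ (2 * α)) ≤
      ENNReal.ofReal (Real.exp (-(c₄ / (1 - 2 * α)) *
        (((b : ℝ) + 1) ^ (1 - 2 * α) - ((a : ℝ) + 1) ^ (1 - 2 * α)))) := by
  have hp : 0 < 1 - 2 * α := by linarith
  have hsum := succ_rpow_sub_succ_rpow_le_sum hp.le (by linarith) a b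
  have hterm : ∀ l ∈ Finset.Ioc a b, (l : ℝ) ^ (1 - 2 * α - 1) = ((l : ℝ) ^ (2 * α))⁻¹ := by
    intro l _
    rw [show 1 - 2 * α - 1 = -(2 * α) by ring, Real.rpow_neg (Nat.cast_nonneg l)]
  rw [Finset.sum_congr rfl hterm] at hsum
  calc ∏ l ∈ Finset.Ioc a b, ENNReal.ofReal (1 - c₄ / (l : ℝ) ^ (2 * α))
      ≤ ∏ l ∈ Finset.Ioc a b, ENNReal.ofReal (Real.exp (-(c₄ / (l : ℝ) ^ (2 * α)))) :=
        Finset.prod_le_prod' fun l _ => ENNReal.ofReal_le_ofReal <| by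
          linarith [Real.add_one_le_exp (-(c₄ / (l : ℝ) ^ (2 * α)))]
    _ = ENNReal.ofReal (Real.exp (-(c₄ * ∑ l ∈ Finset.Ioc a b, ((l : ℝ) ^ (2 * α))⁻¹))) := by
        rw [← ENNReal.ofReal_prod_of_nonneg fun _ _ => (Real.exp_pos _).le, ← Real.exp_sum,
          Finset.mul_sum, ← Finset.sum_neg_distrib]
        simp only [div_eq_mul_inv]
    _ ≤ _ := by
        gcongr
        rw [neg_mul, neg_le_neg_iff, div_mul_eq_mul_div, div_le_iff₀ hp]
        nlinarith

lemma rpow_le_div_add_one_rpow {p : ℝ} (hp : 0 ≤ p) {n₀ : ℕ} (hn₀ : 0 < n₀) (n : ℕ) :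
    (n : ℝ) ^ p / (n₀ : ℝ) ^ p ≤ (((n / n₀ : ℕ) : ℝ) + 1) ^ p := by
  rw [← Real.div_rpow (Nat.cast_nonneg n) (Nat.cast_nonneg n₀)]
  gcongr
  rw [div_le_iff₀ (by exact_mod_cast hn₀)]
  have h : n ≤ (n / n₀ + 1) * n₀ := by
    have := Nat.lt_div_mul_add (a := n) hn₀
    rw [add_mul, one_mul]
    omega
  exact_mod_cast h

lemma div_add_two_rpow_le {p : ℝ} (hp0 : 0 ≤ p) (hp1 : p ≤ 1) (m n₀ : ℕ) :
    (((m / n₀ + 1 : ℕ) : ℝ) + 1) ^ p ≤ (m : ℝ) ^ p / (n₀ : ℝ) ^ p + 2 := by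
  calc (((m / n₀ + 1 : ℕ) : ℝ) + 1) ^ p ≤ ((m : ℝ) / n₀ + 2) ^ p := by
        have := Nat.cast_div_le (α := ℝ) (m := m) (n := n₀)
        push_cast
        exact Real.rpow_le_rpow (by positivity) (by linarith) hp0
    _ ≤ ((m : ℝ) / n₀) ^ p + 2 ^ p :=
        Real.rpow_add_le_add_rpow (by positivity) (by norm_num) hp0 hp1
    _ ≤ (m : ℝ) ^ p / (n₀ : ℝ) ^ p + 2 := by
        rw [Real.div_rpow (Nat.cast_nonneg m) (Nat.cast_nonneg n₀)]
        linarith [Real.rpow_le_rpow_of_exponent_le (x := 2) one_le_two hp1, Real.rpow_one (2 : ℝ)]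

lemma prod_ofReal_one_sub_div_rpow_Ioc_div_le {c₄ α : ℝ} (hc₄ : 0 ≤ c₄) (hα0 : 0 ≤ α)
    (hα : α < 1 / 2) {n₀ : ℕ} (hn₀ : 0 < n₀) (m n : ℕ) :
    ∏ l ∈ Finset.Ioc (m / n₀ + 1) (n / n₀), ENNReal.ofReal (1 - c₄ / (l : ℝ) ^ (2 * α)) ≤
      ENNReal.ofReal (Real.exp (2 * (c₄ / (1 - 2 * α))) *
        Real.exp (c₄ / (1 - 2 * α) / (n₀ : ℝ) ^ (1 - 2 * α) * (m : ℝ) ^ (1 - 2 * α) -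
          c₄ / (1 - 2 * α) / (n₀ : ℝ) ^ (1 - 2 * α) * (n : ℝ) ^ (1 - 2 * α))) := by
  refine (prod_ofReal_one_sub_div_rpow_le hc₄ hα0 hα _ _).trans ?_
  rw [← Real.exp_add]
  gcongr
  set p := 1 - 2 * α
  have hp : 0 < p := by linarith
  have hK : 0 ≤ c₄ / p := by positivity
  have hn := mul_le_mul_of_nonneg_left (rpow_le_div_add_one_rpow hp.le hn₀ n) hK
  have hm := mul_le_mul_of_nonneg_left (div_add_two_rpow_le hp.le (by linarith) m n₀) hK
  linear_combination hn + hm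

/-- Valued in `ℝ≥0∞` so that the Tonelli and independence arguments need no integrability. -/
noncomputable def invNormRpow {E : Type*} [Norm E] (s : ℝ) (v : E) : ℝ≥0∞ :=
  ENNReal.ofReal (‖v‖ ^ (-s))

section invNormRpow

variable {E F : Type*} [NormedAddCommGroup E] [NormedAddCommGroup F] {s : ℝ}

lemma measurable_invNormRpow [MeasurableSpace E] [OpensMeasurableSpace E] :
    Measurable (invNormRpow (E := E) s) :=
  ENNReal.measurable_ofReal.comp (measurable_norm.pow_const _)

lemma invNormRpow_zero (hs : s ≠ 0) : invNormRpow s (0 : E) = 0 := by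
  simp [invNormRpow, Real.zero_rpow (neg_ne_zero.2 hs)]

lemma invNormRpow_of_norm_eq_one {v : E} (hv : ‖v‖ = 1) : invNormRpow s v = 1 := by
  simp [invNormRpow, hv]

lemma invNormRpow_smul [NormedSpace ℝ E] (c : ℝ) (v : E) :
    invNormRpow s (c • v) = invNormRpow s c * invNormRpow s v := by
  rw [invNormRpow, norm_smul, Real.mul_rpow (norm_nonneg _) (norm_nonneg _),
    ENNReal.ofReal_mul (by positivity)]
  rfl

lemma ContinuousLinearMap.invNormRpow_apply_le [NormedSpace ℝ E] [NormedSpace ℝ F]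
    (A : E →L[ℝ] F) {K : ℝ} (hK : 0 < K) (hs : 0 < s) {w : E} (h : ‖w‖ ≤ K * ‖A w‖) :
    invNormRpow s (A w) ≤ ENNReal.ofReal (K ^ s) * invNormRpow s w := by
  rcases eq_or_ne w 0 with rfl | hw
  · simp [invNormRpow_zero hs.ne']
  have hw' : 0 < ‖w‖ := norm_pos_iff.2 hw
  have hAw : K⁻¹ * ‖w‖ ≤ ‖A w‖ := by rwa [inv_mul_le_iff₀ hK]
  rw [invNormRpow, invNormRpow, ← ENNReal.ofReal_mul (by positivity)]
  refine ENNReal.ofReal_le_ofReal ?_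
  calc ‖A w‖ ^ (-s) ≤ (K⁻¹ * ‖w‖) ^ (-s) :=
        Real.rpow_le_rpow_of_nonpos (by positivity) hAw (by linarith)
    _ = K ^ s * ‖w‖ ^ (-s) := by
        rw [Real.mul_rpow (by positivity) hw'.le, Real.inv_rpow hK.le, Real.rpow_neg hK.le,
          inv_inv]

end invNormRpow

section blockProd

variable {Ω : Type} {T : ℕ → Ω → (E₂ →L[ℝ] E₂)}

lemma blockProd_add (ω : Ω) (len₁ len₂ top : ℕ) :
    blockProd T ω (len₁ + len₂) top = blockProd T ω len₁ top * blockProd T ω len₂ (top - len₁) := by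
  simp only [blockProd, List.range_add, List.map_append, List.prod_append, List.map_map]
  congr 4 with i
  simp only [Function.comp_apply, Nat.sub_sub]

lemma blockProd_succ (ω : Ω) (len top : ℕ) :
    blockProd T ω (len + 1) top = T top ω * blockProd T ω len (top - 1) := by
  rw [Nat.add_comm, blockProd_add]
  simp [blockProd]

lemma measurable_blockProd {m : MeasurableSpace Ω} {len top : ℕ}
    (hT : ∀ i < len, Measurable[m] (T (top - i))) :
    Measurable[m] fun ω => blockProd T ω len top := by
  convert List.measurable_prod ((List.range len).map fun i => T (top - i)) (by simpa using hT)
    using 1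
  ext1 ω
  simp [blockProd, Pi.list_prod_apply, Function.comp_def]

lemma measurable_blockProd_apply [MeasurableSpace Ω] (hmeas : ∀ j, Measurable (T j))
    (len top : ℕ) (v : E₂) : Measurable fun ω => blockProd T ω len top v :=
  (ContinuousLinearMap.apply ℝ E₂ v).continuous.measurable.comp
    (measurable_blockProd fun _ _ => hmeas _)

lemma invNormRpow_blockProd_le {M s : ℝ} (hM : 0 < M) (hs : 0 < s)
    (hlow : ∀ j ω v, ‖v‖ ≤ M * ‖T j ω v‖) (ω : Ω) (len top : ℕ) (v : E₂) :
    invNormRpow s (blockProd T ω len top v) ≤ ENNReal.ofReal (M ^ s) ^ len * invNormRpow s v := by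
  induction len generalizing top with
  | zero => simp [blockProd]
  | succ len ih =>
    rw [blockProd_succ, mul_apply_eq_comp, pow_succ', mul_assoc]
    exact ((T top ω).invNormRpow_apply_le hM hs (hlow _ _ _)).trans (by gcongr; exact ih _)

lemma measurable_iSup_comap {J : Set ℕ} {j : ℕ} (hj : j ∈ J) :
    Measurable[⨆ i ∈ J, MeasurableSpace.comap (T i) inferInstance] (T j) :=
  measurable_iff_comap_le.2 (le_iSup₂ (f := fun i (_ : i ∈ J) =>
    MeasurableSpace.comap (T i) inferInstance) j hj)

end blockProd

lemma lintegral_invNormRpow_le_of_condExp_le {Ω : Type*} {m mΩ : MeasurableSpace Ω}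
    {μ : Measure Ω} [IsProbabilityMeasure μ] {s : ℝ} {A : Ω → E₂ →L[ℝ] E₂} (hA : Measurable A)
    (hs : 0 < s) {K : ℝ≥0∞} (hK : K ≠ ∞) (hbdd : ∀ ω w, invNormRpow s (A ω w) ≤ K * invNormRpow s w)
    (hm : m ≤ mΩ) {q : ℝ}
    (hq : ∀ ψ : E₂, ‖ψ‖ = 1 → μ[fun ω => ‖A ω ψ‖ ^ (-s) | m] ≤ᵐ[μ] fun _ => q) (v : E₂) :
    ∫⁻ ω, invNormRpow s (A ω v) ∂μ ≤ ENNReal.ofReal q * invNormRpow s v := by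
  rcases eq_or_ne v 0 with rfl | hv
  · simp [invNormRpow_zero hs.ne']
  set ψ := ‖v‖⁻¹ • v
  have hψ : ‖ψ‖ = 1 := norm_smul_inv_norm hv
  have hAψ : Measurable fun ω => A ω ψ :=
    (ContinuousLinearMap.apply ℝ E₂ ψ).continuous.measurable.comp hA
  have hint : Integrable (fun ω => ‖A ω ψ‖ ^ (-s)) μ := by
    refine ⟨(hAψ.norm.pow_const _).aestronglyMeasurable,
      (hasFiniteIntegral_iff_ofReal (ae_of_all _ fun _ => by positivity)).2 ?_⟩
    exact (lintegral_mono fun ω => hbdd ω ψ).trans_lt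
      (by simp [invNormRpow_of_norm_eq_one hψ, hK.lt_top])
  have hmean : ∫ ω, ‖A ω ψ‖ ^ (-s) ∂μ ≤ q := by
    rw [← integral_condExp hm]
    simpa using integral_mono_ae integrable_condExp (integrable_const q) (hq ψ hψ)
  have hscale : ∀ ω, invNormRpow s (A ω v) = invNormRpow s v * invNormRpow s (A ω ψ) := by
    intro ω
    have hv' : v = ‖v‖ • ψ := by simp [ψ, smul_smul, mul_inv_cancel₀ (norm_ne_zero_iff.2 hv)]
    conv_lhs => rw [hv', map_smul, invNormRpow_smul]
    simp only [invNormRpow, norm_norm]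
  calc ∫⁻ ω, invNormRpow s (A ω v) ∂μ = invNormRpow s v * ∫⁻ ω, invNormRpow s (A ω ψ) ∂μ := by
        simp_rw [hscale]
        exact lintegral_const_mul _ (measurable_invNormRpow.comp hAψ)
    _ = invNormRpow s v * ENNReal.ofReal (∫ ω, ‖A ω ψ‖ ^ (-s) ∂μ) := by
        rw [ofReal_integral_eq_lintegral_ofReal hint (ae_of_all _ fun _ => by positivity)]
        rfl
    _ ≤ ENNReal.ofReal q * invNormRpow s v := by
        rw [mul_comm]
        gcongr

section Probability

variable {Ω : Type} [MeasurableSpace Ω] {μ : Measure Ω}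
  {T : ℕ → Ω → (E₂ →L[ℝ] E₂)} {s : ℝ}

lemma indepFun_blockProd_blockProd (hmeas : ∀ j, Measurable (T j)) (hindep : iIndepFun T μ)
    {len₁ len₂ top : ℕ} (hlen : len₁ ≤ top) :
    IndepFun (fun ω => blockProd T ω len₁ top) (fun ω => blockProd T ω len₂ (top - len₁)) μ := by
  have hdisj : Disjoint (Set.Ioc (top - len₁) top) (Set.Iic (top - len₁)) :=
    Set.disjoint_left.2 fun j hj hj' => by
      simp only [Set.mem_Ioc, Set.mem_Iic] at hj hj'
      omega
  have hI := indep_iSup_of_disjoint (fun j => (hmeas j).comap_le) hindep.iIndep hdisj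
  rw [IndepFun_iff_Indep]
  refine indep_of_indep_of_le_left (indep_of_indep_of_le_right hI ?_) ?_
  · exact (measurable_blockProd fun i _ => measurable_iSup_comap (by simp)).comap_le
  · exact (measurable_blockProd fun i hi => measurable_iSup_comap (by simp; omega)).comap_le

lemma lintegral_invNormRpow_blockProd_add_le [IsFiniteMeasure μ] (hmeas : ∀ j, Measurable (T j))
    (hindep : iIndepFun T μ) {len₁ top : ℕ} (hlen : len₁ ≤ top) {r : ℝ≥0∞}
    (hr : ∀ v, ∫⁻ ω, invNormRpow s (blockProd T ω len₁ top v) ∂μ ≤ r * invNormRpow s v)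
    (len : ℕ) (v : E₂) :
    ∫⁻ ω, invNormRpow s (blockProd T ω (len₁ + len) top v) ∂μ ≤
      r * ∫⁻ ω, invNormRpow s (blockProd T ω len (top - len₁) v) ∂μ := by
  have happ : Measurable fun z : (E₂ →L[ℝ] E₂) × E₂ => z.1 z.2 :=
    isBoundedBilinearMap_apply.continuous.measurable
  have hpast := measurable_blockProd_apply hmeas len (top - len₁) v
  simp_rw [blockProd_add, mul_apply_eq_comp]
  rw [← lintegral_const_mul (f := fun ω => invNormRpow s (blockProd T ω len (top - len₁) v)) r
    (measurable_invNormRpow.comp hpast)]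
  exact ((indepFun_blockProd_blockProd hmeas hindep hlen).comp measurable_id
    (ContinuousLinearMap.apply ℝ E₂ v).continuous.measurable).lintegral_comp_le
    (measurable_blockProd fun _ _ => hmeas _) hpast (measurable_invNormRpow.comp happ) hr

lemma lintegral_invNormRpow_blockProd_blocks_le [IsFiniteMeasure μ]
    (hmeas : ∀ j, Measurable (T j)) (hindep : iIndepFun T μ) {n₀ : ℕ} {q : ℕ → ℝ≥0∞}
    (hq : ∀ l, 1 ≤ l → ∀ v,
      ∫⁻ ω, invNormRpow s (blockProd T ω n₀ (l * n₀) v) ∂μ ≤ q l * invNormRpow s v)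
    (j len : ℕ) (v : E₂) : ∀ k : ℕ,
    ∫⁻ ω, invNormRpow s (blockProd T ω (k * n₀ + len) ((j + k) * n₀) v) ∂μ ≤
      (∏ l ∈ Finset.Ioc j (j + k), q l) *
        ∫⁻ ω, invNormRpow s (blockProd T ω len (j * n₀) v) ∂μ
  | 0 => by simp
  | k + 1 => by
    have hstep := lintegral_invNormRpow_blockProd_add_le hmeas hindep
      (le_mul_of_one_le_left (Nat.zero_le n₀) (by omega : 1 ≤ j + k + 1))
      (hq (j + k + 1) (by omega)) (k * n₀ + len) v
    rw [show (j + k + 1) * n₀ - n₀ = (j + k) * n₀ by rw [add_mul, one_mul, Nat.add_sub_cancel]]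
      at hstep
    rw [show (k + 1) * n₀ + len = n₀ + (k * n₀ + len) by ring, show j + (k + 1) = j + k + 1 by ring,
      Finset.prod_Ioc_succ_top (Nat.le_add_right j k), mul_comm _ (q _), mul_assoc]
    exact hstep.trans
      (by gcongr; exact lintegral_invNormRpow_blockProd_blocks_le hmeas hindep hq j len v k)

lemma lintegral_invNormRpow_blockProd_add_le_pow {M : ℝ} (hM : 0 < M) (hs : 0 < s)
    (hlow : ∀ j ω v, ‖v‖ ≤ M * ‖T j ω v‖) (len₁ len top : ℕ) (v : E₂) :
    ∫⁻ ω, invNormRpow s (blockProd T ω (len₁ + len) top v) ∂μ ≤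
      ENNReal.ofReal (M ^ s) ^ len₁ *
        ∫⁻ ω, invNormRpow s (blockProd T ω len (top - len₁) v) ∂μ := by
  rw [← lintegral_const_mul' _ _ (ENNReal.pow_ne_top ENNReal.ofReal_ne_top)]
  refine lintegral_mono fun ω => ?_
  rw [blockProd_add, mul_apply_eq_comp]
  exact invNormRpow_blockProd_le hM hs hlow ω _ _ _

lemma lintegral_invNormRpow_blockProd_le_pow [IsProbabilityMeasure μ] {M : ℝ} (hM : 0 < M)
    (hs : 0 < s) (hlow : ∀ j ω v, ‖v‖ ≤ M * ‖T j ω v‖) (len top : ℕ) (v : E₂) :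
    ∫⁻ ω, invNormRpow s (blockProd T ω len top v) ∂μ ≤
      ENNReal.ofReal (M ^ s) ^ len * invNormRpow s v :=
  (lintegral_mono fun ω => invNormRpow_blockProd_le hM hs hlow ω len top v).trans (by simp)

lemma lintegral_invNormRpow_blockProd_le [IsProbabilityMeasure μ]
    (hmeas : ∀ j, Measurable (T j)) (hindep : iIndepFun T μ) {M : ℝ} (hM : 1 ≤ M) (hs : 0 < s)
    (hlow : ∀ j ω v, ‖v‖ ≤ M * ‖T j ω v‖) {n₀ : ℕ} (hn₀ : 1 ≤ n₀) {q : ℕ → ℝ≥0∞}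
    (hq : ∀ l, 1 ≤ l → ∀ v,
      ∫⁻ ω, invNormRpow s (blockProd T ω n₀ (l * n₀) v) ∂μ ≤ q l * invNormRpow s v)
    (m n : ℕ) (v : E₂) :
    ∫⁻ ω, invNormRpow s (blockProd T ω (n - m + 1) n v) ∂μ ≤
      ENNReal.ofReal (M ^ s) ^ (2 * n₀) * (∏ l ∈ Finset.Ioc (m / n₀ + 1) (n / n₀), q l) *
        invNormRpow s v := by
  have hM₀ : 0 < M := zero_lt_one.trans_le hM
  have hρ : 1 ≤ ENNReal.ofReal (M ^ s) := ENNReal.one_le_ofReal.2 (Real.one_le_rpow hM hs.le)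
  set a := m / n₀ + 1
  set b := n / n₀
  have hb : b * n₀ ≤ n ∧ n < b * n₀ + n₀ :=
    ⟨Nat.div_mul_le_self n n₀, Nat.lt_div_mul_add (by omega)⟩
  have ha : m < a * n₀ ∧ a * n₀ ≤ m + n₀ := by
    have := Nat.div_mul_le_self m n₀
    have := Nat.lt_div_mul_add (a := m) (show 0 < n₀ by omega)
    simp only [a, add_one_mul]
    omega
  rcases lt_or_ge b a with hba | hab
  · have hlen : n - m + 1 ≤ 2 * n₀ := by
      have : b * n₀ + n₀ ≤ a * n₀ := by rw [← add_one_mul]; exact Nat.mul_le_mul_right _ hba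
      omega
    rw [Finset.Ioc_eq_empty_of_le hba.le, Finset.prod_empty, mul_one]
    exact (lintegral_invNormRpow_blockProd_le_pow hM₀ hs hlow _ _ v).trans (by gcongr)
  -- `T_n ⋯ T_m` = (`n - b n₀ < n₀` factors) · (full blocks `a+1, …, b`) · (`≤ n₀ + 1` factors)
  set k := b - a
  have hk : a * n₀ + k * n₀ = b * n₀ := by rw [← add_mul, Nat.add_sub_cancel' hab]
  have hsplit : n - m + 1 = (n - b * n₀) + (k * n₀ + (a * n₀ + 1 - m)) := by omega
  have htop : n - (n - b * n₀) = (a + k) * n₀ := by rw [add_mul]; omega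
  calc ∫⁻ ω, invNormRpow s (blockProd T ω (n - m + 1) n v) ∂μ
      ≤ ENNReal.ofReal (M ^ s) ^ (n - b * n₀) *
          ∫⁻ ω, invNormRpow s (blockProd T ω (k * n₀ + (a * n₀ + 1 - m)) ((a + k) * n₀) v) ∂μ := by
        rw [hsplit, ← htop]
        exact lintegral_invNormRpow_blockProd_add_le_pow hM₀ hs hlow _ _ _ v
    _ ≤ ENNReal.ofReal (M ^ s) ^ (n - b * n₀) * ((∏ l ∈ Finset.Ioc a (a + k), q l) *
          (ENNReal.ofReal (M ^ s) ^ (a * n₀ + 1 - m) * invNormRpow s v)) := by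
        gcongr
        exact (lintegral_invNormRpow_blockProd_blocks_le hmeas hindep hq a _ v k).trans
          (by gcongr; exact lintegral_invNormRpow_blockProd_le_pow hM₀ hs hlow _ _ v)
    _ = ENNReal.ofReal (M ^ s) ^ (n - b * n₀ + (a * n₀ + 1 - m)) *
          (∏ l ∈ Finset.Ioc a b, q l) * invNormRpow s v := by
        rw [Nat.add_sub_cancel' hab, pow_add]
        ring
    _ ≤ ENNReal.ofReal (M ^ s) ^ (2 * n₀) * (∏ l ∈ Finset.Ioc a b, q l) * invNormRpow s v := by
        gcongr
        omega

end Probability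

theorem stmt_15_general (M c₄ s α : ℝ) (n₀ : ℕ) (hM : 1 ≤ M) (hc₄ : 0 < c₄) (hs : 0 < s)
    (hα0 : 0 < α) (hα : α < 1 / 2) (hn₀ : 1 ≤ n₀)
    {Ω : Type} [MeasurableSpace Ω] (μ : Measure Ω) [IsProbabilityMeasure μ]
    (T S : ℕ → Ω → (EuclideanSpace ℝ (Fin 2) →L[ℝ] EuclideanSpace ℝ (Fin 2)))
    (hmeas : ∀ j, Measurable (T j))
    (hindep : iIndepFun T μ)
    (hSM : ∀ j ω, ‖S j ω‖ ≤ M)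
    (hinv : ∀ j ω, T j ω ∘L S j ω = ContinuousLinearMap.id ℝ (EuclideanSpace ℝ (Fin 2)) ∧
      S j ω ∘L T j ω = ContinuousLinearMap.id ℝ (EuclideanSpace ℝ (Fin 2)))
    (hblock : ∀ l : ℕ, 1 ≤ l → ∀ ψ : EuclideanSpace ℝ (Fin 2), ‖ψ‖ = 1 →
      μ[(fun ω => ‖(blockProd T ω n₀ (l * n₀)) ψ‖ ^ (-s)) |
          ⨆ j ∈ Finset.Icc 1 ((l - 1) * n₀), MeasurableSpace.comap (T j) inferInstance]
        ≤ᵐ[μ] fun _ => 1 - c₄ / (l : ℝ) ^ (2 * α)) :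
    ∃ C > 0, ∃ c > 0, ∀ m n : ℕ, m < n → ∀ ψ₀ : EuclideanSpace ℝ (Fin 2), ‖ψ₀‖ = 1 →
      ∫ ω, ‖(blockProd T ω (n - m + 1) n) ψ₀‖ ^ (-s) ∂μ ≤
        C * Real.exp (c * (m : ℝ) ^ (1 - 2 * α) - c * (n : ℝ) ^ (1 - 2 * α)) := by
  have hlow : ∀ j ω v, ‖v‖ ≤ M * ‖T j ω v‖ := fun j ω v =>
    calc ‖v‖ = ‖S j ω (T j ω v)‖ := by rw [← comp_apply, (hinv j ω).2, id_apply]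
      _ ≤ M * ‖T j ω v‖ := (S j ω).le_of_opNorm_le (hSM j ω) _
  have hq : ∀ l, 1 ≤ l → ∀ v, ∫⁻ ω, invNormRpow s (blockProd T ω n₀ (l * n₀) v) ∂μ ≤
      ENNReal.ofReal (1 - c₄ / (l : ℝ) ^ (2 * α)) * invNormRpow s v := fun l hl =>
    lintegral_invNormRpow_le_of_condExp_le (measurable_blockProd fun _ _ => hmeas _) hs
      (ENNReal.pow_ne_top ENNReal.ofReal_ne_top)
      (fun ω => invNormRpow_blockProd_le (zero_lt_one.trans_le hM) hs hlow ω n₀ _)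
      (iSup₂_le fun j _ => (hmeas j).comap_le) (hblock l hl)
  have hp : 0 < 1 - 2 * α := by linarith
  refine ⟨(M ^ s) ^ (2 * n₀) * Real.exp (2 * (c₄ / (1 - 2 * α))), by positivity,
    c₄ / (1 - 2 * α) / (n₀ : ℝ) ^ (1 - 2 * α), div_pos (div_pos hc₄ hp) (by positivity),
    fun m n _ ψ₀ hψ₀ => ?_⟩
  have hbound := lintegral_invNormRpow_blockProd_le hmeas hindep hM hs hlow hn₀ hq m n ψ₀
  rw [invNormRpow_of_norm_eq_one hψ₀, mul_one] at hbound
  have hprod := prod_ofReal_one_sub_div_rpow_Ioc_div_le hc₄.le hα0.le hα hn₀ m n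
  rw [integral_eq_lintegral_of_nonneg_ae (ae_of_all _ fun _ => by positivity)
    ((measurable_blockProd_apply hmeas _ _ ψ₀).norm.pow_const _).aestronglyMeasurable]
  refine ENNReal.toReal_le_of_le_ofReal (by positivity)
    ((hbound.trans (mul_le_mul_right hprod _)).trans_eq ?_)
  rw [← ENNReal.ofReal_pow (by positivity), ← ENNReal.ofReal_mul (by positivity), mul_assoc]

/-- Iterated-conditioning estimate: if each block of `n₀` consecutive independent transfer
matrices contracts the negative fractional moment by `1 - c₄ l^{-2α}` conditionally on the
past, and all matrices and their inverses are bounded by `M`, then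
`E[‖T_n ⋯ T_m ψ₀‖^{-s}] ≤ C exp(c m^{1-2α} - c n^{1-2α})`. -/
theorem stmt_15 (M c₄ s α : ℝ) (n₀ : ℕ) (hM : 1 ≤ M) (hc₄ : 0 < c₄) (hs : 0 < s)
    (hα0 : 0 < α) (hα : α < 1 / 2) (hn₀ : 1 ≤ n₀)
    {Ω : Type} [MeasurableSpace Ω] (μ : Measure Ω) [IsProbabilityMeasure μ]
    (T S : ℕ → Ω → (EuclideanSpace ℝ (Fin 2) →L[ℝ] EuclideanSpace ℝ (Fin 2)))
    (hmeas : ∀ j, Measurable (T j))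
    (hindep : iIndepFun T μ)
    (hTM : ∀ j ω, ‖T j ω‖ ≤ M) (hSM : ∀ j ω, ‖S j ω‖ ≤ M)
    (hinv : ∀ j ω, T j ω ∘L S j ω = ContinuousLinearMap.id ℝ (EuclideanSpace ℝ (Fin 2)) ∧
      S j ω ∘L T j ω = ContinuousLinearMap.id ℝ (EuclideanSpace ℝ (Fin 2)))
    (hblock : ∀ l : ℕ, 1 ≤ l → ∀ ψ : EuclideanSpace ℝ (Fin 2), ‖ψ‖ = 1 →
      μ[(fun ω => ‖(blockProd T ω n₀ (l * n₀)) ψ‖ ^ (-s)) |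
          ⨆ j ∈ Finset.Icc 1 ((l - 1) * n₀), MeasurableSpace.comap (T j) inferInstance]
        ≤ᵐ[μ] fun _ => 1 - c₄ / (l : ℝ) ^ (2 * α)) :
    ∃ C > 0, ∃ c > 0, ∀ m n : ℕ, m < n → ∀ ψ₀ : EuclideanSpace ℝ (Fin 2), ‖ψ₀‖ = 1 →
      ∫ ω, ‖(blockProd T ω (n - m + 1) n) ψ₀‖ ^ (-s) ∂μ ≤
        C * Real.exp (c * (m : ℝ) ^ (1 - 2 * α) - c * (n : ℝ) ^ (1 - 2 * α)) :=
  stmt_15_general M c₄ s α n₀ hM hc₄ hs hα0 hα hn₀ μ T S hmeas hindep hSM hinv hblock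
end
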